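/- Let (x_1, x_2) take the value (0,0) with probability p_0, (1,0) with probability p_1, and (0,1) with probability p_2, where p_0 + p_1 + p_2 = 1 and p_1, p_2 > 0, and let y = f(x_1,x_2) take corresponding values y_0, y_1, y_2 with σ² := Var(y) > 0. Write ȳ_1 = y_1 − y_0 and ȳ_2 = y_2 − y_0. Then the Shapley value φ_1 of variable 1 satisfies φ_1/σ² = (1/2)(1 + (p_0/σ²) · (p_1(1−p_1)ȳ_1² − p_2(1−p_2)ȳ_2²)/((1−p_1)(1−p_2))). -/

import Mathlib

/-! A variable `x` with values in `{0, 1}` generates the σ-algebra `{∅, {x = 0}, {x = 1}, Ω}`,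
so `E[Y | x]` is the average of `Y` over the level set of `x`, that is `a + (b - a) x` with `a`, `b`
the averages of `Y` over `{x = 0}` and `{x = 1}`; its variance is `(b - a)² P(x = 0) P(x = 1)`.
On the three-point space both `x₁` and `x₂` are such indicators, and since
`φ₁ / σ² = (1 + (Var E[Y | x₁] - Var E[Y | x₂]) / σ²) / 2`, the claim reduces to an identity
between rational functions of the `pᵢ` and `yᵢ` once `p₀ = 1 - p₁ - p₂` is substituted. -/

open MeasureTheory ProbabilityTheory

/-- The three-point measure on `Fin 3` putting mass `p₀, p₁, p₂` on `0, 1, 2`;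
point `i = 0` represents `(x₁,x₂) = (0,0)`, `i = 1` represents `(1,0)` and
`i = 2` represents `(0,1)`, so that the point `(1,1)` is a hole. -/
noncomputable def threePt (p₀ p₁ p₂ : ℝ) : Measure (Fin 3) :=
  ENNReal.ofReal p₀ • Measure.dirac 0 + ENNReal.ofReal p₁ • Measure.dirac 1
    + ENNReal.ofReal p₂ • Measure.dirac 2

/-- The first input: `x₁ = 1` exactly on the atom `(1,0)`. -/
noncomputable def xOne : Fin 3 → ℝ := ![0, 1, 0]

/-- The second input: `x₂ = 1` exactly on the atom `(0,1)`. -/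
noncomputable def xTwo : Fin 3 → ℝ := ![0, 0, 1]

/-- The Shapley value of variable `1` in the bivariate game `val u = Var(E[Y ∣ x_u])`:
`φ₁ = (1/2)(Var(E[Y ∣ x₁]) + Var(Y) - Var(E[Y ∣ x₂]))`. -/
noncomputable def phiOne {Ω : Type*} [MeasurableSpace Ω] (μ : Measure Ω)
    (x₁ x₂ : Ω → ℝ) (Y : Ω → ℝ) : ℝ :=
  (1 / 2) * (variance (μ[Y | MeasurableSpace.comap x₁ Real.measurableSpace]) μ
    + variance Y μ
    - variance (μ[Y | MeasurableSpace.comap x₂ Real.measurableSpace]) μ)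

section ZeroOneValued

variable {Ω : Type*} {mΩ : MeasurableSpace Ω} {μ : Measure Ω} {x : Ω → ℝ}

theorem setIntegral_preimage_eq_of_zero_or_one (hx : Measurable x)
    (hx01 : ∀ ω, x ω = 0 ∨ x ω = 1) {f g : Ω → ℝ} (hf : Integrable f μ) (hg : Integrable g μ)
    (h₀ : ∫ ω in {ω | x ω = 0}, f ω ∂μ = ∫ ω in {ω | x ω = 0}, g ω ∂μ)
    (h₁ : ∫ ω in {ω | x ω = 1}, f ω ∂μ = ∫ ω in {ω | x ω = 1}, g ω ∂μ)
    {t : Set ℝ} (ht : MeasurableSet t) :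
    ∫ ω in x ⁻¹' t, f ω ∂μ = ∫ ω in x ⁻¹' t, g ω ∂μ := by
  have hsplit : x ⁻¹' t = x ⁻¹' (t ∩ {0}) ∪ x ⁻¹' (t ∩ {1}) := by
    ext ω; rcases hx01 ω with h | h <;> simp [h]
  have hcell : ∀ c : ℝ, ∫ ω in {ω | x ω = c}, f ω ∂μ = ∫ ω in {ω | x ω = c}, g ω ∂μ →
      ∫ ω in x ⁻¹' (t ∩ {c}), f ω ∂μ = ∫ ω in x ⁻¹' (t ∩ {c}), g ω ∂μ := by
    intro c hc
    by_cases hct : c ∈ t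
    · rwa [Set.inter_singleton_of_mem hct]
    · simp [Set.inter_singleton_eq_empty.mpr hct]
  have hdisj : Disjoint (x ⁻¹' (t ∩ {0})) (x ⁻¹' (t ∩ {1})) :=
    (Set.disjoint_singleton.mpr zero_ne_one).mono Set.inter_subset_right
      Set.inter_subset_right |>.preimage x
  have hmeas : MeasurableSet (x ⁻¹' (t ∩ {1})) := hx (ht.inter (measurableSet_singleton 1))
  rw [hsplit, setIntegral_union hdisj hmeas hf.integrableOn hf.integrableOn,
    setIntegral_union hdisj hmeas hg.integrableOn hg.integrableOn, hcell 0 h₀, hcell 1 h₁]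

theorem condExp_comap_ae_eq_of_zero_or_one [IsFiniteMeasure μ] (hx : Measurable x)
    (hx01 : ∀ ω, x ω = 0 ∨ x ω = 1) {Y : Ω → ℝ} (hY : Integrable Y μ) :
    μ[Y | MeasurableSpace.comap x Real.measurableSpace] =ᵐ[μ] fun ω ↦
      (⨍ ω in {ω | x ω = 0}, Y ω ∂μ)
        + ((⨍ ω in {ω | x ω = 1}, Y ω ∂μ) - ⨍ ω in {ω | x ω = 0}, Y ω ∂μ) * x ω := by
  set a := ⨍ ω in {ω | x ω = 0}, Y ω ∂μ
  set b := ⨍ ω in {ω | x ω = 1}, Y ω ∂μ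
  have hcell : ∀ c : ℝ, (c = 0 ∨ c = 1) →
      ∫ ω in {ω | x ω = c}, a + (b - a) * x ω ∂μ = ∫ ω in {ω | x ω = c}, Y ω ∂μ := by
    intro c hc
    calc ∫ ω in {ω | x ω = c}, a + (b - a) * x ω ∂μ
        = ∫ _ in {ω | x ω = c}, ⨍ ω in {ω | x ω = c}, Y ω ∂μ ∂μ := by
          refine setIntegral_congr_fun (hx (measurableSet_singleton c)) ?_
          rintro ω (hω : x ω = c)
          rcases hc with rfl | rfl <;> simp [a, b, hω]
      _ = ∫ ω in {ω | x ω = c}, Y ω ∂μ := by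
          rw [setIntegral_const, measure_smul_setAverage _ (measure_ne_top μ _)]
  have hlin : Measurable[MeasurableSpace.comap x Real.measurableSpace] fun ω ↦ a + (b - a) * x ω :=
    (comap_measurable x).const_mul _ |>.const_add _
  have hx_int : Integrable x μ :=
    .of_bound hx.aestronglyMeasurable 1 <| .of_forall fun ω ↦ by
      rcases hx01 ω with h | h <;> simp [h]
  have hlin_int : Integrable (fun ω ↦ a + (b - a) * x ω) μ :=
    (integrable_const a).add (hx_int.const_mul _)
  refine (ae_eq_condExp_of_forall_setIntegral_eq hx.comap_le hY
    (fun _ _ _ ↦ hlin_int.integrableOn) ?_ hlin.aestronglyMeasurable).symm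
  rintro _ ⟨t, ht, rfl⟩ -
  exact setIntegral_preimage_eq_of_zero_or_one hx hx01 hlin_int hY (hcell 0 (.inl rfl))
    (hcell 1 (.inr rfl)) ht

theorem variance_const_add_mul_of_zero_or_one [IsProbabilityMeasure μ] (hx : Measurable x)
    (hx01 : ∀ ω, x ω = 0 ∨ x ω = 1) (a d : ℝ) :
    Var[fun ω ↦ a + d * x ω; μ] = d ^ 2 * (μ.real {ω | x ω = 0} * μ.real {ω | x ω = 1}) := by
  rw [variance_const_add (hx.const_mul d).aestronglyMeasurable, variance_const_mul,
    variance_of_ae_eq_zero_or_one hx.aemeasurable (.of_forall hx01)]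

theorem variance_condExp_comap_of_zero_or_one [IsProbabilityMeasure μ] (hx : Measurable x)
    (hx01 : ∀ ω, x ω = 0 ∨ x ω = 1) {Y : Ω → ℝ} (hY : Integrable Y μ) :
    Var[μ[Y | MeasurableSpace.comap x Real.measurableSpace]; μ]
      = ((⨍ ω in {ω | x ω = 1}, Y ω ∂μ) - ⨍ ω in {ω | x ω = 0}, Y ω ∂μ) ^ 2
        * (μ.real {ω | x ω = 0} * μ.real {ω | x ω = 1}) := by
  rw [variance_congr (condExp_comap_ae_eq_of_zero_or_one hx hx01 hY),
    variance_const_add_mul_of_zero_or_one hx hx01]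

end ZeroOneValued

section ThreePoint

variable {p₀ p₁ p₂ : ℝ}

theorem isProbabilityMeasure_threePt (hp₀ : 0 ≤ p₀) (hp₁ : 0 ≤ p₁) (hp₂ : 0 ≤ p₂)
    (hsum : p₀ + p₁ + p₂ = 1) : IsProbabilityMeasure (threePt p₀ p₁ p₂) := by
  constructor
  simp only [threePt, Measure.add_apply, Measure.smul_apply, measure_univ, smul_eq_mul, mul_one]
  rw [← ENNReal.ofReal_add hp₀ hp₁, ← ENNReal.ofReal_add (by positivity) hp₂, hsum,
    ENNReal.ofReal_one]

theorem threePt_real_singleton (hp₀ : 0 ≤ p₀) (hp₁ : 0 ≤ p₁) (hp₂ : 0 ≤ p₂) (i : Fin 3) :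
    (threePt p₀ p₁ p₂).real {i} = ![p₀, p₁, p₂] i := by
  fin_cases i <;> simp [threePt, measureReal_def, hp₀, hp₁, hp₂]

theorem threePt_real_finset (hp₀ : 0 ≤ p₀) (hp₁ : 0 ≤ p₁) (hp₂ : 0 ≤ p₂)
    (hsum : p₀ + p₁ + p₂ = 1) (s : Finset (Fin 3)) :
    (threePt p₀ p₁ p₂).real s = ∑ i ∈ s, ![p₀, p₁, p₂] i := by
  have := isProbabilityMeasure_threePt hp₀ hp₁ hp₂ hsum
  simp only [← sum_measureReal_singleton, threePt_real_singleton hp₀ hp₁ hp₂]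

theorem setAverage_threePt (hp₀ : 0 ≤ p₀) (hp₁ : 0 ≤ p₁) (hp₂ : 0 ≤ p₂)
    (hsum : p₀ + p₁ + p₂ = 1) (f : Fin 3 → ℝ) (s : Finset (Fin 3)) :
    ⨍ i in s, f i ∂threePt p₀ p₁ p₂
      = (∑ i ∈ s, ![p₀, p₁, p₂] i * f i) / ∑ i ∈ s, ![p₀, p₁, p₂] i := by
  have := isProbabilityMeasure_threePt hp₀ hp₁ hp₂ hsum
  rw [setAverage_eq, setIntegral_finset _ Integrable.of_finite.integrableOn,
    threePt_real_finset hp₀ hp₁ hp₂ hsum]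
  simp only [threePt_real_singleton hp₀ hp₁ hp₂, smul_eq_mul, div_eq_inv_mul]

theorem xOne_eq_zero_or_one (i : Fin 3) : xOne i = 0 ∨ xOne i = 1 := by
  fin_cases i <;> simp [xOne]

theorem xTwo_eq_zero_or_one (i : Fin 3) : xTwo i = 0 ∨ xTwo i = 1 := by
  fin_cases i <;> simp [xTwo]

theorem setOf_xOne_eq_zero : {i | xOne i = 0} = ↑({0, 2} : Finset (Fin 3)) := by
  ext i; fin_cases i <;> simp [xOne]

theorem setOf_xOne_eq_one : {i | xOne i = 1} = ↑({1} : Finset (Fin 3)) := by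
  ext i; fin_cases i <;> simp [xOne]

theorem setOf_xTwo_eq_zero : {i | xTwo i = 0} = ↑({0, 1} : Finset (Fin 3)) := by
  ext i; fin_cases i <;> simp [xTwo]

theorem setOf_xTwo_eq_one : {i | xTwo i = 1} = ↑({2} : Finset (Fin 3)) := by
  ext i; fin_cases i <;> simp [xTwo]

theorem variance_condExp_xOne (hp₀ : 0 ≤ p₀) (hp₁ : 0 < p₁) (hp₂ : 0 ≤ p₂)
    (hsum : p₀ + p₁ + p₂ = 1) (y₀ y₁ y₂ : ℝ) :
    Var[(threePt p₀ p₁ p₂)[![y₀, y₁, y₂] | MeasurableSpace.comap xOne Real.measurableSpace];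
        threePt p₀ p₁ p₂]
      = (y₁ - (p₀ * y₀ + p₂ * y₂) / (p₀ + p₂)) ^ 2 * ((p₀ + p₂) * p₁) := by
  have := isProbabilityMeasure_threePt hp₀ hp₁.le hp₂ hsum
  rw [variance_condExp_comap_of_zero_or_one .of_discrete xOne_eq_zero_or_one .of_finite,
    setOf_xOne_eq_zero, setOf_xOne_eq_one, setAverage_threePt hp₀ hp₁.le hp₂ hsum,
    setAverage_threePt hp₀ hp₁.le hp₂ hsum, threePt_real_finset hp₀ hp₁.le hp₂ hsum,
    threePt_real_finset hp₀ hp₁.le hp₂ hsum]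
  simp [hp₁.ne']

theorem variance_condExp_xTwo (hp₀ : 0 ≤ p₀) (hp₁ : 0 ≤ p₁) (hp₂ : 0 < p₂)
    (hsum : p₀ + p₁ + p₂ = 1) (y₀ y₁ y₂ : ℝ) :
    Var[(threePt p₀ p₁ p₂)[![y₀, y₁, y₂] | MeasurableSpace.comap xTwo Real.measurableSpace];
        threePt p₀ p₁ p₂]
      = (y₂ - (p₀ * y₀ + p₁ * y₁) / (p₀ + p₁)) ^ 2 * ((p₀ + p₁) * p₂) := by
  have := isProbabilityMeasure_threePt hp₀ hp₁ hp₂.le hsum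
  rw [variance_condExp_comap_of_zero_or_one .of_discrete xTwo_eq_zero_or_one .of_finite,
    setOf_xTwo_eq_zero, setOf_xTwo_eq_one, setAverage_threePt hp₀ hp₁ hp₂.le hsum,
    setAverage_threePt hp₀ hp₁ hp₂.le hsum, threePt_real_finset hp₀ hp₁ hp₂.le hsum,
    threePt_real_finset hp₀ hp₁ hp₂.le hsum]
  simp [hp₂.ne']

end ThreePoint

/-- Shapley effects for a distribution with a hole: `(x₁,x₂)` takes the values
`(0,0), (1,0), (0,1)` with probabilities `p₀, p₁, p₂` and `y` takes the corresponding
values `y₀, y₁, y₂`.  Writing `ȳⱼ = yⱼ - y₀`, the Shapley value of `x₁` satisfies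
`φ₁/σ² = (1/2)(1 + (p₀/σ²) (p₁(1-p₁)ȳ₁² - p₂(1-p₂)ȳ₂²)/((1-p₁)(1-p₂)))`. -/
theorem threePt_shapley (p₀ p₁ p₂ : ℝ) (hp₀ : 0 ≤ p₀) (hp₁ : 0 < p₁) (hp₂ : 0 < p₂)
    (hsum : p₀ + p₁ + p₂ = 1) (y₀ y₁ y₂ : ℝ)
    (hvar : 0 < variance ![y₀, y₁, y₂] (threePt p₀ p₁ p₂)) :
    phiOne (threePt p₀ p₁ p₂) xOne xTwo ![y₀, y₁, y₂]
        / variance ![y₀, y₁, y₂] (threePt p₀ p₁ p₂)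
      = (1 / 2) * (1 + p₀ / variance ![y₀, y₁, y₂] (threePt p₀ p₁ p₂)
          * ((p₁ * (1 - p₁) * (y₁ - y₀) ^ 2 - p₂ * (1 - p₂) * (y₂ - y₀) ^ 2)
            / ((1 - p₁) * (1 - p₂)))) := by
  rw [phiOne, variance_condExp_xOne hp₀ hp₁ hp₂.le hsum, variance_condExp_xTwo hp₀ hp₁.le hp₂ hsum]
  obtain rfl : p₀ = 1 - p₁ - p₂ := by linarith
  have hp₁' : 1 - p₁ ≠ 0 := by linarith
  have hp₂' : 1 - p₂ ≠ 0 := by linarith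
  rw [show 1 - p₁ - p₂ + p₂ = 1 - p₁ by ring, show 1 - p₁ - p₂ + p₁ = 1 - p₂ by ring]
  field_simp [hvar.ne']
  ring
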